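/- Let γ ≠ 0, κ(x) = tanh(x/√2), b_γ(x) = tanh((|x| - c_γ)/√2) with c_γ = (1/√2) sinh⁻¹(-2√2/γ), and let E_γ(u) = (1/2)∫|u'|² + (γ/2)|u(0)|² + (1/4)∫(1-|u|²)². Then E_γ(b_γ) - E_γ(κ) = -Θ_γ² (γ/2 + (2√2/3)Θ_γ), where Θ_γ = tanh(-c_γ/√2). In particular E_γ(b_γ) < E_γ(κ) if γ > 0 and E_γ(b_γ) > E_γ(κ) if γ < 0. -/

import Mathlib

/-!
Both profiles are, up to the evenness of the energy densities, of the form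
`u = tanh ((|x| - a) / √2)`. Such `u` satisfy the equipartition `u'² = (1 - u²)² / 2` away
from `0`, so `E_γ(u) = (1/2) ∫ (1 - u²)² + (γ/2) u(0)²`, and on each half-line `(1 - u²)²` is
`√2` times the derivative of `Q(u)`, `Q(t) = t - t³/3`. Hence
`E_γ(u) = √2 (2/3 - Q(u(0))) + (γ/2) u(0)²`. For `b_γ` we have `u(0) = Θ_γ`, for `κ` we have
`a = 0`, and the relation `γ Θ_γ = √2 (1 - Θ_γ²)`, which comes from
`sinh (2t) (1 - tanh² t) = 2 tanh t`, turns the difference into the stated cubic; `Θ_γ` has the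
sign of `γ`.
-/

open MeasureTheory

/-- The energy `E_γ(u) = (1/2)∫|u'|² + (γ/2)|u(0)|² + (1/4)∫(1-|u|²)²` for real-valued `u`. -/
noncomputable def EgammaR (γ : ℝ) (u : ℝ → ℝ) : ℝ :=
  (1/2) * (∫ x : ℝ, (deriv u x) ^ 2) + (γ/2) * (u 0) ^ 2
    + (1/4) * (∫ x : ℝ, (1 - (u x) ^ 2) ^ 2)

open Set Filter Real Topology

namespace Real

theorem one_sub_tanh_sq (x : ℝ) : 1 - tanh x ^ 2 = (cosh x ^ 2)⁻¹ := by
  have := (cosh_pos x).ne'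
  rw [tanh_eq_sinh_div_cosh]
  field_simp
  linear_combination cosh_sq_sub_sinh_sq x

theorem hasDerivAt_tanh (x : ℝ) : HasDerivAt tanh (1 - tanh x ^ 2) x := by
  have hcosh := (cosh_pos x).ne'
  have h := (hasDerivAt_sinh x).div (hasDerivAt_cosh x) hcosh
  have htanh : sinh / cosh = tanh := funext fun y => (tanh_eq_sinh_div_cosh y).symm
  rw [htanh] at h
  refine h.congr_deriv ?_
  rw [one_sub_tanh_sq, ← sq, ← sq, cosh_sq_sub_sinh_sq, one_div]

theorem tendsto_tanh_atTop : Tendsto tanh atTop (𝓝 1) := by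
  have h : ∀ x, tanh x = 1 - 2 / (exp (2 * x) + 1) := fun x => by
    rw [tanh_eq, exp_neg, show 2 * x = x + x by ring, exp_add]
    field_simp
    ring
  have hden : Tendsto (fun x => exp (2 * x) + 1) atTop atTop :=
    tendsto_atTop_add_const_right _ 1
      (tendsto_exp_atTop.comp (tendsto_id.const_mul_atTop two_pos))
  have h2 := (tendsto_const_nhds (x := (1 : ℝ))).sub
    ((tendsto_const_nhds (x := (2 : ℝ))).div_atTop hden)
  rw [sub_zero] at h2
  exact h2.congr fun x => (h x).symm

theorem sinh_two_mul_mul_one_sub_tanh_sq (x : ℝ) :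
    sinh (2 * x) * (1 - tanh x ^ 2) = 2 * tanh x := by
  have := (cosh_pos x).ne'
  rw [one_sub_tanh_sq, sinh_two_mul, tanh_eq_sinh_div_cosh]
  field_simp

end Real

theorem hasDerivAt_tanh_sub_tanh_pow_three_div_three (x : ℝ) :
    HasDerivAt (fun x => tanh x - tanh x ^ 3 / 3) ((1 - tanh x ^ 2) ^ 2) x := by
  have h := hasDerivAt_tanh x
  refine (h.sub ((h.pow 3).div_const 3)).congr_deriv ?_
  push_cast
  ring

theorem integral_Ioi_one_sub_tanh_sq_sq {s : ℝ} (hs : 0 < s) (a : ℝ) :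
    ∫ x in Ioi 0, (1 - tanh ((x - a) / s) ^ 2) ^ 2
      = s * (2 / 3 - (tanh (-a / s) - tanh (-a / s) ^ 3 / 3)) := by
  set Q : ℝ → ℝ := fun t => tanh t - tanh t ^ 3 / 3
  have hQ (x : ℝ) :
      HasDerivAt (fun x => s * Q ((x - a) / s)) ((1 - tanh ((x - a) / s) ^ 2) ^ 2) x := by
    have hlin : HasDerivAt (fun x => (x - a) / s) (1 / s) x := by
      simpa using ((hasDerivAt_id x).sub_const a).div_const s
    have h := ((hasDerivAt_tanh_sub_tanh_pow_three_div_three _).comp x hlin).const_mul s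
    refine h.congr_deriv ?_
    field_simp
  have hlim : Tendsto (fun x => s * Q ((x - a) / s)) atTop (𝓝 (s * (2 / 3))) := by
    have hQlim : Tendsto Q atTop (𝓝 (1 - 1 ^ 3 / 3)) :=
      tendsto_tanh_atTop.sub ((tendsto_tanh_atTop.pow 3).div_const 3)
    norm_num at hQlim
    refine (hQlim.comp ?_).const_mul s
    exact (tendsto_atTop_add_const_right _ (-a) tendsto_id).atTop_div_const hs
  rw [integral_Ioi_of_hasDerivAt_of_nonneg' (fun x _ => hQ x) (fun x _ => by positivity) hlim]
  simp only [Q, zero_sub]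
  ring

theorem integral_one_sub_tanh_abs_sq_sq {s : ℝ} (hs : 0 < s) (a : ℝ) :
    ∫ x, (1 - tanh ((|x| - a) / s) ^ 2) ^ 2
      = 2 * s * (2 / 3 - (tanh (-a / s) - tanh (-a / s) ^ 3 / 3)) := by
  rw [integral_comp_abs (f := fun x => (1 - tanh ((x - a) / s) ^ 2) ^ 2),
    integral_Ioi_one_sub_tanh_sq_sq hs, mul_assoc]

theorem deriv_tanh_abs_sub_div_sq {x : ℝ} (hx : x ≠ 0) (a s : ℝ) :
    deriv (fun x => tanh ((|x| - a) / s)) x ^ 2 = (1 - tanh ((|x| - a) / s) ^ 2) ^ 2 / s ^ 2 := by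
  have hlin : HasDerivAt (fun x => (|x| - a) / s) (SignType.sign x / s) x :=
    ((hasDerivAt_abs hx).sub_const a).div_const s
  have h : HasDerivAt (fun x => tanh ((|x| - a) / s)) _ x := (hasDerivAt_tanh _).comp x hlin
  rw [h.deriv]
  rcases hx.lt_or_gt with hneg | hpos <;> simp [*, div_eq_mul_inv, mul_pow]

theorem EgammaR_eq_of_equipartition (γ : ℝ) {u : ℝ → ℝ}
    (hu : ∀ᵐ x, deriv u x ^ 2 = (1 - u x ^ 2) ^ 2 / 2) :
    EgammaR γ u = (1 / 2) * (∫ x, (1 - u x ^ 2) ^ 2) + γ / 2 * u 0 ^ 2 := by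
  rw [EgammaR, integral_congr_ae hu, integral_div]
  ring

theorem EgammaR_tanh_abs_sub (γ a : ℝ) :
    EgammaR γ (fun x => tanh ((|x| - a) / √2))
      = √2 * (2 / 3 - (tanh (-a / √2) - tanh (-a / √2) ^ 3 / 3))
        + γ / 2 * tanh (-a / √2) ^ 2 := by
  have hu : ∀ᵐ x, deriv (fun x => tanh ((|x| - a) / √2)) x ^ 2
      = (1 - tanh ((|x| - a) / √2) ^ 2) ^ 2 / 2 := by
    filter_upwards [volume.ae_ne 0] with x hx
    rw [deriv_tanh_abs_sub_div_sq hx, sq_sqrt zero_le_two]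
  rw [EgammaR_eq_of_equipartition γ hu, integral_one_sub_tanh_abs_sq_sq (by positivity),
    abs_zero, zero_sub]
  ring

theorem EgammaR_kink (γ : ℝ) : EgammaR γ (fun x => tanh (x / √2)) = 2 * √2 / 3 := by
  have hu : ∀ x, deriv (fun x => tanh (x / √2)) x ^ 2 = (1 - tanh (x / √2) ^ 2) ^ 2 / 2 := by
    intro x
    have h : HasDerivAt (fun x => tanh (x / √2)) _ x :=
      (hasDerivAt_tanh _).comp x ((hasDerivAt_id x).div_const √2)
    rw [h.deriv, mul_pow, div_pow, sq_sqrt zero_le_two]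
    ring
  have heven : ∀ x, (1 - tanh (x / √2) ^ 2) ^ 2 = (1 - tanh ((|x| - 0) / √2) ^ 2) ^ 2 := by
    intro x
    rcases abs_choice x with h | h <;> simp [h, neg_div]
  rw [EgammaR_eq_of_equipartition γ (ae_of_all _ hu), integral_congr_ae (ae_of_all _ heven),
    integral_one_sub_tanh_abs_sq_sq (by positivity)]
  simp only [neg_zero, zero_div, tanh_zero]
  ring

theorem mul_one_sub_tanh_half_arsinh_sq (y : ℝ) :
    y * (1 - tanh (arsinh y / 2) ^ 2) = 2 * tanh (arsinh y / 2) := by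
  simpa [mul_div_cancel₀] using sinh_two_mul_mul_one_sub_tanh_sq (arsinh y / 2)

/-- Energy comparison between the soliton `b_γ` and the kink `κ`:
`E_γ(b_γ) - E_γ(κ) = -Θ_γ²(γ/2 + (2√2/3)Θ_γ)`; hence `E_γ(b_γ) < E_γ(κ)` iff `γ > 0`. -/
theorem energy_b_gamma_vs_kink (γ : ℝ) (hγ : γ ≠ 0) :
    let cγ : ℝ := (1 / Real.sqrt 2) * Real.arsinh (-(2 * Real.sqrt 2) / γ)
    let Θ : ℝ := Real.tanh (-cγ / Real.sqrt 2)
    let κ : ℝ → ℝ := fun x => Real.tanh (x / Real.sqrt 2)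
    let b : ℝ → ℝ := fun x => Real.tanh ((|x| - cγ) / Real.sqrt 2)
    EgammaR γ b - EgammaR γ κ = -Θ ^ 2 * (γ / 2 + (2 * Real.sqrt 2 / 3) * Θ) ∧
    (0 < γ → EgammaR γ b < EgammaR γ κ) ∧
    (γ < 0 → EgammaR γ κ < EgammaR γ b) := by
  intro cγ Θ κ b
  have hΘ : γ * Θ = √2 * (1 - Θ ^ 2) := by
    have harg : -cγ / √2 = arsinh (2 * √2 / γ) / 2 := by
      simp only [cγ, neg_div, arsinh_neg]
      field_simp
      rw [sq_sqrt zero_le_two]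
    have h := mul_one_sub_tanh_half_arsinh_sq (2 * √2 / γ)
    rw [← harg] at h
    change 2 * √2 / γ * (1 - Θ ^ 2) = 2 * Θ at h
    field_simp at h
    exact h.symm
  have hdiff : EgammaR γ b - EgammaR γ κ = -Θ ^ 2 * (γ / 2 + (2 * √2 / 3) * Θ) := by
    rw [EgammaR_tanh_abs_sub, EgammaR_kink]
    linear_combination Θ * hΘ
  have hγΘ : 0 < γ * Θ := hΘ ▸ mul_pos (by positivity) (sub_pos.2 (tanh_sq_lt_one _))
  refine ⟨hdiff, fun hγpos => ?_, fun hγneg => ?_⟩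
  · have hΘpos : 0 < Θ := pos_of_mul_pos_right hγΘ hγpos.le
    rw [← sub_neg, hdiff]
    exact mul_neg_of_neg_of_pos (neg_neg_of_pos (pow_pos hΘpos 2))
      (add_pos (half_pos hγpos) (mul_pos (by positivity) hΘpos))
  · have hΘneg : Θ < 0 := neg_of_mul_pos_right hγΘ hγneg.le
    rw [← sub_pos, hdiff]
    exact mul_pos_of_neg_of_neg (neg_neg_of_pos (sq_pos_of_neg hΘneg))
      (add_neg (div_neg_of_neg_of_pos hγneg two_pos)
        (mul_neg_of_pos_of_neg (by positivity) hΘneg))
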